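/- Let G be a semi-Markovian DAG satisfying Assumption 1 and let Z ⊆ X^(o). If there exists a path between t and y in G not containing the edge t → y that is not blocked by Z ∪ {t}, then there exists a path between t and y in G not containing the edge t → y that is not blocked by Z. -/

import Mathlib

namespace CausalDAG

variable {V : Type*}

/-- Adjacency: an edge between `u` and `v` in either direction. -/
def Adj (E : V → V → Prop) (u v : V) : Prop := E u v ∨ E v u

/-- `d` is a descendant of `v`: there is a directed path from `v` to `d`. -/
def Descendant (E : V → V → Prop) (v d : V) : Prop := Relation.TransGen E v d

/-- The directed graph with edge relation `E` is acyclic. -/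
def Acyclic (E : V → V → Prop) : Prop := ∀ v, ¬ Relation.TransGen E v v

/-- A path between `a` and `b` in the graph with edge relation `E`:
a sequence of at least two distinct nodes, starting at `a`, ending at `b`,
with consecutive nodes joined by an edge (in either direction). -/
structure GPath (E : V → V → Prop) (a b : V) where
  nodes : List V
  nodup : nodes.Nodup
  two_le : 2 ≤ nodes.length
  head_eq : nodes.head? = some a
  last_eq : nodes.getLast? = some b
  chain : nodes.Chain' (Adj E)

namespace GPath

variable {E : V → V → Prop} {a b : V}

/-- `i` is an interior position of the path. -/
def Interior (p : GPath E a b) (i : ℕ) : Prop := 0 < i ∧ i + 1 < p.nodes.length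

/-- The node at interior position `i` is a collider on the path: both adjacent
edges of the path point into it. -/
def ColliderAt (p : GPath E a b) (i : ℕ) : Prop :=
  ∃ x v z, p.nodes[(i - 1)]? = some x ∧ p.nodes[i]? = some v ∧
    p.nodes[(i + 1)]? = some z ∧ E x v ∧ E z v

/-- The path is blocked by the set `S`. -/
def BlockedBy (p : GPath E a b) (S : Set V) : Prop :=
  ∃ i v, p.Interior i ∧ p.nodes[i]? = some v ∧
    ((¬ p.ColliderAt i ∧ v ∈ S) ∨
      (p.ColliderAt i ∧ v ∉ S ∧ ∀ d, Descendant E v d → d ∉ S))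

/-- The path contains the directed edge `u → v` as one of its steps. -/
def UsesEdge (p : GPath E a b) (u v : V) : Prop :=
  E u v ∧ ∃ i, (p.nodes[i]? = some u ∧ p.nodes[(i + 1)]? = some v) ∨
    (p.nodes[i]? = some v ∧ p.nodes[(i + 1)]? = some u)

/-- The path contains an edge pointing into its first endpoint. -/
def IntoFirst (p : GPath E a b) : Prop :=
  ∃ w, p.nodes[1]? = some w ∧ E w a

end GPath

/-- `a` and `b` are d-separated by `S`: every path between them is blocked by `S`. -/
def DSep (E : V → V → Prop) (a b : V) (S : Set V) : Prop :=
  ∀ p : GPath E a b, p.BlockedBy S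

/-- `Z` satisfies the back-door criterion relative to `(t, y)`: no node of `Z` is a
descendant of `t`, and `Z` blocks every path between `t` and `y` containing an edge
pointing into `t`. -/
def BackDoor (E : V → V → Prop) (t y : V) (Z : Set V) : Prop :=
  (∀ z ∈ Z, ¬ Descendant E t z) ∧
  ∀ p : GPath E t y, p.IntoFirst → p.BlockedBy Z

/-- A semi-Markovian DAG: observed features `Xo`, unobserved features `Xu`,
treatment `t`, outcome `y`; unobserved nodes have no parents and at most two
children. -/
structure SemiMarkov (V : Type*) where
  E : V → V → Prop
  Xo : Set V
  Xu : Set V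
  t : V
  y : V
  acyclic : Acyclic E
  t_ne_y : t ≠ y
  t_notin : t ∉ Xo ∪ Xu
  y_notin : y ∉ Xo ∪ Xu
  disjoint : Disjoint Xo Xu
  cover : ∀ v, v ∈ Xo ∨ v ∈ Xu ∨ v = t ∨ v = y
  unobs_no_parents : ∀ u ∈ Xu, ∀ w, ¬ E w u
  unobs_children : ∀ u ∈ Xu, ∃ a b, ∀ c, E u c → c = a ∨ c = b

/-- Assumption 1: `y` is the only child of `t`, and `y` has no children. -/
def Assumption1 (M : SemiMarkov V) : Prop :=
  M.E M.t M.y ∧ (∀ w, M.E M.t w → w = M.y) ∧ ∀ w, ¬ M.E M.y w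

/-- Edge relation of the sub-sampled graph `G_e`: a new node `e` (represented by
`none`) is added, together with the edge `x_t → e` and an edge `v → e` for each
`v ∈ V0`. -/
def subEdge (E : V → V → Prop) (xt : V) (V0 : Set V) :
    Option V → Option V → Prop
  | some u, some v => E u v
  | some u, none => u = xt ∨ u ∈ V0
  | none, _ => False

end CausalDAG

/-!
Let `c` be the last node at which the path is blocked by `Z`. Since `Z ∪ {t}` does not block
it there, `c` is a collider with no descendant in `Z` but with `t` as a descendant. Going back
up a directed path from `c` to `t` and then along the original path from `c` to `y` gives a
path that is not blocked by `Z` and whose first edge points into `t`; by acyclicity such a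
path cannot use the edge `t → y`.
-/

namespace CausalDAG

variable {V : Type*} {E : V → V → Prop} {S : Set V}

theorem Acyclic.asymm (hac : Acyclic E) {u v : V} (huv : E u v) : ¬ E v u :=
  fun hvu => hac u (.tail (.single huv) hvu)

theorem Acyclic.ne_of_transGen (hac : Acyclic E) {u v : V} (huv : Relation.TransGen E u v) :
    u ≠ v := by
  rintro rfl
  exact hac u huv

def IsColliderAt (E : V → V → Prop) (l : List V) (i : ℕ) : Prop :=
  ∃ x v z, l[(i - 1)]? = some x ∧ l[i]? = some v ∧ l[(i + 1)]? = some z ∧ E x v ∧ E z v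

-- `p.BlockedBy S` unfolds to `∃ i, BlocksAt E S p.nodes i`.
def BlocksAt (E : V → V → Prop) (S : Set V) (l : List V) (i : ℕ) : Prop :=
  ∃ v, (0 < i ∧ i + 1 < l.length) ∧ l[i]? = some v ∧
    ((¬ IsColliderAt E l i ∧ v ∈ S) ∨
      (IsColliderAt E l i ∧ v ∉ S ∧ ∀ d, Descendant E v d → d ∉ S))

theorem isColliderAt_drop_succ (l : List V) (n j : ℕ) :
    IsColliderAt E (l.drop n) (j + 1) ↔ IsColliderAt E l (n + j + 1) := by
  simp only [IsColliderAt, List.getElem?_drop, Nat.add_sub_cancel, ← Nat.add_assoc]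

theorem blocksAt_drop_succ (l : List V) (n j : ℕ) :
    BlocksAt E S (l.drop n) (j + 1) ↔ BlocksAt E S l (n + j + 1) := by
  have hint : (0 < j + 1 ∧ j + 1 + 1 < (l.drop n).length) ↔
      (0 < n + j + 1 ∧ n + j + 1 + 1 < l.length) := by
    simp only [List.length_drop]; omega
  simp only [BlocksAt, isColliderAt_drop_succ, hint, List.getElem?_drop, ← Nat.add_assoc]

theorem blocksAt_cons_succ_succ (w : V) (l : List V) (j : ℕ) :
    BlocksAt E S (w :: l) (j + 2) ↔ BlocksAt E S l (j + 1) := by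
  simpa [Nat.add_comm 1] using (blocksAt_drop_succ (E := E) (S := S) (w :: l) 1 j).symm

theorem BlocksAt.descendant_of_not_blocksAt_union {l : List V} {k : ℕ} {c t : V}
    (h : BlocksAt E S l k) (h' : ¬ BlocksAt E (S ∪ {t}) l k) (hc : l[k]? = some c)
    (hct : c ≠ t) :
    c ∉ S ∧ (∀ d, Descendant E c d → d ∉ S) ∧ Descendant E c t := by
  obtain ⟨v, hint, hv, ⟨hnc, hvS⟩ | ⟨hcol, hvS, hdS⟩⟩ := h
  · exact absurd ⟨v, hint, hv, Or.inl ⟨hnc, Or.inl hvS⟩⟩ h'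
  obtain rfl : v = c := Option.some_injective _ (hv.symm.trans hc)
  refine ⟨hvS, hdS, ?_⟩
  by_contra hvt
  refine h' ⟨v, hint, hv, Or.inr ⟨hcol, ?_, ?_⟩⟩
  · rintro (hS | rfl)
    exacts [hvS hS, hct rfl]
  · rintro d hd (hS | rfl)
    exacts [hdS d hd hS, hvt hd]

namespace GPath

variable {a b c : V}

theorem getElem?_zero (p : GPath E a b) : p.nodes[0]? = some a := by
  rw [← List.head?_eq_getElem?]
  exact p.head_eq

theorem getElem?_length_sub_one (p : GPath E a b) : p.nodes[p.nodes.length - 1]? = some b := by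
  rw [← List.getLast?_eq_getElem?]
  exact p.last_eq

theorem eq_zero_of_getElem?_eq (p : GPath E a b) {i : ℕ} (h : p.nodes[i]? = some a) : i = 0 :=
  (List.getElem?_inj (List.getElem?_eq_some_iff.mp h).1 p.nodup).mp (h.trans p.getElem?_zero.symm)

theorem exists_last_blocksAt (p : GPath E a b) (h : p.BlockedBy S) :
    ∃ k, BlocksAt E S p.nodes k ∧ ∀ i, k < i → ¬ BlocksAt E S p.nodes i := by
  classical
  have hbdd : ∀ i, BlocksAt E S p.nodes i → i ≤ p.nodes.length := by
    rintro i ⟨v, ⟨-, hi⟩, -⟩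
    omega
  obtain ⟨i₀, hi₀⟩ := h
  refine ⟨_, Nat.findGreatest_spec (hbdd i₀ hi₀) hi₀, fun i hi hbi => ?_⟩
  exact Nat.findGreatest_is_greatest hi (hbdd i hbi) hbi

def drop (p : GPath E a b) (k : ℕ) (hk : k + 1 < p.nodes.length) (hc : p.nodes[k]? = some c) :
    GPath E c b where
  nodes := p.nodes.drop k
  nodup := p.nodup.sublist (List.drop_sublist k _)
  two_le := by rw [List.length_drop]; omega
  head_eq := by rw [List.head?_drop]; exact hc
  last_eq := by rw [List.getLast?_drop, if_neg (by omega)]; exact p.last_eq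
  chain := p.chain.drop k

def cons (p : GPath E a b) (w : V) (hw : w ∉ p.nodes) (hwa : Adj E w a) : GPath E w b where
  nodes := w :: p.nodes
  nodup := List.nodup_cons.mpr ⟨hw, p.nodup⟩
  two_le := by have := p.two_le; simp only [List.length_cons]; omega
  head_eq := rfl
  last_eq := by rw [List.getLast?_cons, p.last_eq]; rfl
  chain := p.chain.cons (by rw [p.head_eq]; rintro _ ⟨⟩; exact hwa)

theorem not_mem_drop (p : GPath E a b) {k : ℕ} (hk : k + 1 < p.nodes.length)
    (hc : p.nodes[k]? = some c) (hk0 : 0 < k) : a ∉ (p.drop k hk hc).nodes := by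
  intro ha
  obtain ⟨m, hm⟩ := List.mem_iff_getElem?.mp ha
  have := p.eq_zero_of_getElem?_eq (List.getElem?_drop ▸ hm)
  omega

theorem not_blockedBy_drop (p : GPath E a b) {k : ℕ} (hk : k + 1 < p.nodes.length)
    (hc : p.nodes[k]? = some c) (h : ∀ i, k < i → ¬ BlocksAt E S p.nodes i) :
    ¬ (p.drop k hk hc).BlockedBy S := by
  rintro ⟨i, hi⟩
  obtain ⟨j, rfl⟩ : ∃ j, i = j + 1 := by
    obtain ⟨v, ⟨hi0, -⟩, -⟩ := hi
    exact ⟨i - 1, by omega⟩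
  exact h _ (by omega) ((blocksAt_drop_succ _ _ _).mp hi)

/-- The old first node `a` is no collider on the extended path, because its new edge leaves `a`. -/
theorem not_blockedBy_cons (p : GPath E a b) {w : V} (hw : w ∉ p.nodes) (haw : E a w)
    (hwa : ¬ E w a) (ha : a ∉ S) (hp : ¬ p.BlockedBy S) :
    ¬ (p.cons w hw (Or.inr haw)).BlockedBy S := by
  rintro ⟨i, hi⟩
  match i, hi with
  | 0, ⟨_, ⟨hi0, _⟩, _⟩ => exact absurd hi0 (lt_irrefl 0)
  | 1, ⟨v, _, hv, hblk⟩ =>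
    obtain rfl : v = a := Option.some_injective _ (hv.symm.trans p.getElem?_zero)
    rcases hblk with ⟨-, hvS⟩ | ⟨⟨x, v', z, hx, hv', -, hxv, -⟩, -⟩
    · exact ha hvS
    · obtain rfl : x = w := Option.some_injective _ hx.symm
      obtain rfl : v' = v := Option.some_injective _ (hv'.symm.trans p.getElem?_zero)
      exact hwa hxv
  | j + 2, hi => exact hp ⟨j + 1, (blocksAt_cons_succ_succ _ _ _).mp hi⟩

theorem intoFirst_cons (p : GPath E a b) {w : V} (hw : w ∉ p.nodes) (haw : E a w) :
    (p.cons w hw (Or.inr haw)).IntoFirst :=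
  ⟨a, p.getElem?_zero, haw⟩

theorem not_usesEdge_of_intoFirst (hac : Acyclic E) (p : GPath E a b) (hp : p.IntoFirst) :
    ¬ p.UsesEdge a b := by
  rintro ⟨hab, i, ⟨hi, hi1⟩ | ⟨-, hi1⟩⟩
  · obtain rfl := p.eq_zero_of_getElem?_eq hi
    obtain ⟨w, hw, hwa⟩ := hp
    obtain rfl : w = b := Option.some_injective _ (hw.symm.trans hi1)
    exact hac.asymm hab hwa
  · exact absurd (p.eq_zero_of_getElem?_eq hi1) i.succ_ne_zero

/-- Walk back up a directed path from `a` to `t`, shortcutting whenever it meets `p`; its nodes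
are descendants of `a`, hence non-colliders outside `S`. -/
theorem exists_intoFirst_of_transGen (hac : Acyclic E) (hb : ∀ w, ¬ E b w) {t : V}
    (hat : Relation.TransGen E a t) (p : GPath E a b) (ht : t ∉ p.nodes)
    (hp : ¬ p.BlockedBy S) (ha : a ∉ S) (hdS : ∀ d, Descendant E a d → d ∉ S) :
    ∃ q : GPath E t b, q.IntoFirst ∧ ¬ q.BlockedBy S := by
  induction hat using Relation.TransGen.head_induction_on with
  | single hat =>
    exact ⟨_, p.intoFirst_cons ht hat, p.not_blockedBy_cons ht hat (hac.asymm hat) ha hp⟩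
  | @head a a' haa' ha't ih =>
    have ha'S : a' ∉ S := hdS a' (.single haa')
    have hdS' : ∀ d, Descendant E a' d → d ∉ S := fun d hd => hdS d (.head haa' hd)
    by_cases ha' : a' ∈ p.nodes
    · obtain ⟨k, hk⟩ := List.mem_iff_getElem?.mp ha'
      have ha'b : a' ≠ b := by
        obtain ⟨z, hz, -⟩ := Relation.TransGen.head'_iff.mp ha't
        rintro rfl
        exact hb z hz
      have hkl : k + 1 < p.nodes.length := by
        have hk' := (List.getElem?_eq_some_iff.mp hk).1
        have hkb : k ≠ p.nodes.length - 1 := by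
          rintro rfl
          exact ha'b (Option.some_injective _ (hk.symm.trans p.getElem?_length_sub_one))
        omega
      exact ih (p.drop k hkl hk) (fun h => ht (List.mem_of_mem_drop h))
        (p.not_blockedBy_drop hkl hk fun i _ hi => hp ⟨i, hi⟩) ha'S hdS'
    · have ht' : t ∉ (p.cons a' ha' (Or.inr haa')).nodes :=
        List.not_mem_cons_of_ne_of_not_mem (hac.ne_of_transGen ha't).symm ht
      exact ih _ ht' (p.not_blockedBy_cons ha' haa' (hac.asymm haa') ha hp) ha'S hdS'

end GPath

end CausalDAG

open CausalDAG in
theorem stmt13_general {V : Type*} (M : SemiMarkov V)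
    (hA1 : Assumption1 M)
    (Z : Set V)
    (h : ∃ p : GPath M.E M.t M.y, ¬ p.UsesEdge M.t M.y ∧
      ¬ p.BlockedBy (Z ∪ {M.t})) :
    ∃ p : GPath M.E M.t M.y, ¬ p.UsesEdge M.t M.y ∧ ¬ p.BlockedBy Z := by
  obtain ⟨p, hpe, hp⟩ := h
  by_cases hpZ : p.BlockedBy Z
  swap
  · exact ⟨p, hpe, hpZ⟩
  obtain ⟨k, hk, hlast⟩ := p.exists_last_blocksAt hpZ
  obtain ⟨c, ⟨hk0, hkl⟩, hc, -⟩ := id hk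
  have hct : c ≠ M.t := by
    rintro rfl
    exact hk0.ne' (p.eq_zero_of_getElem?_eq hc)
  obtain ⟨hcZ, hcdZ, hctd⟩ := hk.descendant_of_not_blocksAt_union (fun h => hp ⟨k, h⟩) hc hct
  obtain ⟨q, hq, hqZ⟩ := (p.drop k hkl hc).exists_intoFirst_of_transGen M.acyclic hA1.2.2 hctd
    (p.not_mem_drop hkl hc hk0) (p.not_blockedBy_drop hkl hc hlast) hcZ hcdZ
  exact ⟨q, q.not_usesEdge_of_intoFirst M.acyclic hq, hqZ⟩

open CausalDAG in
/-- under Assumption 1, if some path between `t` and `y` not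
containing the edge `t → y` is not blocked by `Z ∪ {t}`, then some path between
`t` and `y` not containing the edge `t → y` is not blocked by `Z`. -/
theorem stmt13 {V : Type*} [Finite V] (M : SemiMarkov V)
    (hA1 : Assumption1 M)
    (Z : Set V) (hZ : Z ⊆ M.Xo)
    (h : ∃ p : GPath M.E M.t M.y, ¬ p.UsesEdge M.t M.y ∧
      ¬ p.BlockedBy (Z ∪ {M.t})) :
    ∃ p : GPath M.E M.t M.y, ¬ p.UsesEdge M.t M.y ∧ ¬ p.BlockedBy Z :=
  stmt13_general M hA1 Z h
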